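/- Let n ≥ 0 and d ≥ 1 be integers, and let p(x) = x^d + Σ_{i=1}^d a_{2i} x^{d−i} and r(x) = x^d + Σ_{i=1}^d b_{2i} x^{d−i} be monic real polynomials of degree d. Then the (n,d)-rectangular cumulants of their (n,d)-rectangular convolution satisfy K^{n,d}_{2ℓ}[p ⊞^n_d r] = K^{n,d}_{2ℓ}[p] + K^{n,d}_{2ℓ}[r] for all ℓ = 1, …, d. -/

import Mathlib

/-! Put `w = z²`. The series inside `rectCumulant` is `S(w) = Σ_{i ≤ d} a_{2i} w^i / ((-d)_i (-d-n)_i)`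
evaluated at `z²`. Since `(-D)_i = (-1)^i D!/(D-i)!`, the factorial weights of `⊞^n_d` are exactly
`(-d)_k (-d-n)_k / ((-d)_i (-d-n)_i (-d)_j (-d-n)_j)` for `i + j = k`, so `S` of the convolution
agrees with `S_p · S_r` up to `w^d`. The coefficient of `z^{2ℓ}` in the logarithm only sees
coefficients up to degree `2ℓ ≤ 2d`, and the logarithm turns the product into a sum. The latter
follows from `F · (log F)' = F'`, which holds modulo every power of `X` because the partial sums of
`log (1 + u)` have derivative `(Σ_{k<N} (-u)^k) u'`. -/

open Finset

/-- Pochhammer symbol `(v)_n = v (v+1) ⋯ (v+n-1)`. -/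
noncomputable def pochEval (v : ℝ) (n : ℕ) : ℝ := (ascPochhammer ℝ n).eval v

/-- Formal logarithm of a power series with constant term 1. -/
noncomputable def flog (F : PowerSeries ℝ) : PowerSeries ℝ :=
  PowerSeries.mk fun n =>
    ∑ k ∈ Finset.range n, (-1 : ℝ) ^ k * (PowerSeries.coeff (R := ℝ) n ((F - 1) ^ (k + 1))) / (k + 1)

/-- The `(n,d)`-rectangular finite free cumulants `K^{n,d}_{2ℓ}[p]` of a monic polynomial
`p(x) = x^d + Σ_{i=1}^d a_{2i} x^{d-i}` of degree `d`, given in terms of its coefficient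
sequence (`a i` stands for `a_{2i}`):
`K^{n,d}_{2ℓ}[p] = ℓ·[z^{2ℓ}] log(1 + Σ_{i=1}^d (a_{2i}/((-d)_i (-d-n)_i)) z^{2i})`. -/
noncomputable def rectCumulant (n d : ℕ) (a : ℕ → ℝ) (ℓ : ℕ) : ℝ :=
  (ℓ : ℝ) * PowerSeries.coeff (R := ℝ) (2 * ℓ) (flog (PowerSeries.mk fun j =>
    if j = 0 then 1
    else if j % 2 = 0 ∧ j / 2 ≤ d then
      a (j / 2) / (pochEval (-(d : ℝ)) (j / 2) * pochEval (-(d : ℝ) - (n : ℝ)) (j / 2))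
    else 0))

/-- The coefficient sequence of the `(n,d)`-rectangular convolution `p ⊞^n_d r`:
`(p ⊞^n_d r)(x) = x^d + Σ_{k=1}^d c_{2k} x^{d-k}` with
`c_{2k} = Σ_{i+j=k} [(d-i)!(d-j)!/(d!(d-k)!)]·[(n+d-i)!(n+d-j)!/((n+d)!(n+d-k)!)] a_{2i} b_{2j}`
(with `a_0 = b_0 = 1`; `a i` stands for `a_{2i}`). -/
noncomputable def rectConvCoeff (n d : ℕ) (a b : ℕ → ℝ) (k : ℕ) : ℝ :=
  ∑ i ∈ Finset.range (k + 1),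
    (((d - i).factorial : ℝ) * ((d - (k - i)).factorial : ℝ) /
        ((d.factorial : ℝ) * ((d - k).factorial : ℝ))) *
      (((n + d - i).factorial : ℝ) * ((n + d - (k - i)).factorial : ℝ) /
        (((n + d).factorial : ℝ) * ((n + d - k).factorial : ℝ))) *
      ((if i = 0 then 1 else a i) * (if k - i = 0 then 1 else b (k - i)))

open PowerSeries

namespace PowerSeries

variable {R : Type*} [CommRing R]

theorem X_pow_dvd_pow_of_constantCoeff_eq_zero {u : R⟦X⟧} (hu : constantCoeff u = 0) (k : ℕ) :
    X ^ k ∣ u ^ k :=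
  pow_dvd_pow_of_dvd (X_dvd_iff.mpr hu) k

theorem X_pow_dvd_derivative {f : R⟦X⟧} {n : ℕ} (h : X ^ (n + 1) ∣ f) : X ^ n ∣ d⁄dX R f := by
  rw [X_pow_dvd_iff] at h ⊢
  intro m hm
  rw [coeff_derivative, h (m + 1) (by omega), zero_mul]

theorem coeff_eq_of_X_pow_dvd_sub {f g : R⟦X⟧} {m : ℕ} (h : X ^ (m + 1) ∣ f - g) :
    coeff m f = coeff m g := by
  rw [← sub_eq_zero, ← map_sub]
  exact X_pow_dvd_iff.mp h m m.lt_succ_self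

theorem eq_of_forall_X_pow_dvd_sub {f g : R⟦X⟧} (h : ∀ N, X ^ N ∣ f - g) : f = g :=
  ext fun _ => coeff_eq_of_X_pow_dvd_sub (h _)

end PowerSeries

noncomputable def logPartialSum (N : ℕ) (u : ℝ⟦X⟧) : ℝ⟦X⟧ :=
  ∑ k ∈ range N, ((-1 : ℝ) ^ k / (k + 1)) • u ^ (k + 1)

theorem X_pow_dvd_flog_sub_logPartialSum {F : ℝ⟦X⟧} (hF : constantCoeff F = 1) (N : ℕ) :
    X ^ (N + 1) ∣ flog F - logPartialSum N (F - 1) := by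
  have hu : constantCoeff (F - 1) = 0 := by simp [hF]
  refine X_pow_dvd_iff.mpr fun m hm => ?_
  rw [map_sub, sub_eq_zero, flog, coeff_mk, logPartialSum, map_sum]
  refine (sum_subset (range_subset_range.mpr (by omega : m ≤ N)) fun k _ hk => ?_).trans
    (sum_congr rfl fun k _ => ?_)
  · have hk : m < k + 1 := by simp only [mem_range, not_lt] at hk; omega
    rw [X_pow_dvd_iff.mp (X_pow_dvd_pow_of_constantCoeff_eq_zero hu (k + 1)) m hk]
    simp
  · rw [coeff_smul, smul_eq_mul]
    ring

theorem derivative_logPartialSum (N : ℕ) (u : ℝ⟦X⟧) :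
    d⁄dX ℝ (logPartialSum N u) = (∑ k ∈ range N, (-u) ^ k) * d⁄dX ℝ u := by
  rw [logPartialSum, map_sum, sum_mul]
  refine sum_congr rfl fun k _ => ?_
  rw [Derivation.map_smul, derivative_pow, smul_eq_C_mul, neg_pow u, Nat.add_sub_cancel]
  have hk : ((k : ℝ) + 1) ≠ 0 := by positivity
  have hC : C ((-1 : ℝ) ^ k / (k + 1)) * ((k + 1 : ℕ) : ℝ⟦X⟧) = (-1) ^ k := by
    rw [← map_natCast (C (R := ℝ)), ← map_mul, Nat.cast_succ, div_mul_cancel₀ _ hk]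
    simp
  rw [← hC]
  ring

theorem mul_derivative_flog {F : ℝ⟦X⟧} (hF : constantCoeff F = 1) :
    F * d⁄dX ℝ (flog F) = d⁄dX ℝ F := by
  set u := F - 1
  have hu : X ∣ -u := X_dvd_iff.mpr (by simp [u, hF])
  have hdF : d⁄dX ℝ F = d⁄dX ℝ u := by simp [u]
  refine eq_of_forall_X_pow_dvd_sub fun N => ?_
  have hP : F * d⁄dX ℝ (logPartialSum N u) = d⁄dX ℝ u - (-u) ^ N * d⁄dX ℝ u := by
    rw [derivative_logPartialSum, ← mul_assoc, show F = 1 - -u by ring, mul_neg_geom_sum]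
    ring
  have hsplit : F * d⁄dX ℝ (flog F) - d⁄dX ℝ F =
      F * d⁄dX ℝ (flog F - logPartialSum N u) - (-u) ^ N * d⁄dX ℝ u := by
    rw [map_sub, mul_sub, hP, hdF]
    ring
  rw [hsplit]
  exact dvd_sub (dvd_mul_of_dvd_right (X_pow_dvd_derivative
    (X_pow_dvd_flog_sub_logPartialSum hF N)) F) (dvd_mul_of_dvd_left (pow_dvd_pow_of_dvd hu N) _)

theorem constantCoeff_flog (F : ℝ⟦X⟧) : constantCoeff (flog F) = 0 := by
  rw [← coeff_zero_eq_constantCoeff_apply, flog, coeff_mk, range_zero, sum_empty]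

theorem flog_mul {F G : ℝ⟦X⟧} (hF : constantCoeff F = 1) (hG : constantCoeff G = 1) :
    flog (F * G) = flog F + flog G := by
  have hFG : constantCoeff (F * G) = 1 := by simp [hF, hG]
  have hne : F * G ≠ 0 := ne_zero_of_map (f := constantCoeff) (by rw [hFG]; exact one_ne_zero)
  refine derivative.ext (mul_left_cancel₀ hne ?_) (by simp [constantCoeff_flog])
  rw [mul_derivative_flog hFG, map_add, Derivation.leibniz, smul_eq_mul, smul_eq_mul]
  linear_combination (-G) * mul_derivative_flog hF - F * mul_derivative_flog hG

theorem coeff_flog_eq_of_X_pow_dvd_sub {F G : ℝ⟦X⟧} {m : ℕ} (h : X ^ (m + 1) ∣ F - G) :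
    coeff m (flog F) = coeff m (flog G) := by
  simp only [flog, coeff_mk]
  refine sum_congr rfl fun k _ => ?_
  have h' : X ^ (m + 1) ∣ (F - 1) - (G - 1) := by rwa [sub_sub_sub_cancel_right]
  rw [coeff_eq_of_X_pow_dvd_sub (h'.trans (sub_dvd_pow_sub_pow _ _ (k + 1)))]

open Nat in
theorem pochEval_neg_natCast (D i : ℕ) : pochEval (-(D : ℝ)) i = (-1) ^ i * D.descFactorial i := by
  rw [pochEval, ascPochhammer_eval_neg_eq_descPochhammer, descPochhammer_eval_eq_descFactorial]

open Nat in
theorem factorial_ratio_mul_pochEval {D i k : ℕ} (hi : i ≤ k) (hk : k ≤ D) :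
    ((D - i)! * (D - (k - i))! / (D ! * (D - k)!) : ℝ) *
      (pochEval (-(D : ℝ)) i * pochEval (-(D : ℝ)) (k - i)) = pochEval (-(D : ℝ)) k := by
  have hfi : ((D - i)! * D.descFactorial i : ℝ) = D ! := by
    exact_mod_cast factorial_mul_descFactorial (hi.trans hk)
  have hfj : ((D - (k - i))! * D.descFactorial (k - i) : ℝ) = D ! := by
    exact_mod_cast factorial_mul_descFactorial ((k.sub_le i).trans hk)
  have hfk : ((D - k)! * D.descFactorial k : ℝ) = D ! := by
    exact_mod_cast factorial_mul_descFactorial hk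
  have hsign : ((-1 : ℝ) ^ i * (-1) ^ (k - i)) = (-1) ^ k := by
    rw [← pow_add, Nat.add_sub_cancel' hi]
  simp only [pochEval_neg_natCast, ← hsign]
  have : ((D - k)! : ℝ) ≠ 0 := by positivity
  have : (D ! : ℝ) ≠ 0 := by positivity
  field_simp
  linear_combination ((D - (k - i))! * D.descFactorial (k - i) : ℝ) * hfi + D ! * hfj - D ! * hfk

noncomputable def rectNormalizer (n d i : ℕ) : ℝ :=
  pochEval (-(d : ℝ)) i * pochEval (-(d : ℝ) - (n : ℝ)) i

theorem rectNormalizer_zero (n d : ℕ) : rectNormalizer n d 0 = 1 := by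
  simp [rectNormalizer, pochEval]

theorem neg_natCast_sub_natCast (n d : ℕ) : -(d : ℝ) - (n : ℝ) = -((n + d : ℕ) : ℝ) := by
  push_cast
  ring

theorem rectNormalizer_ne_zero (n : ℕ) {d i : ℕ} (hi : i ≤ d) : rectNormalizer n d i ≠ 0 := by
  simp only [rectNormalizer, neg_natCast_sub_natCast, pochEval_neg_natCast]
  have h₁ : d.descFactorial i ≠ 0 := by rw [Ne, Nat.descFactorial_eq_zero_iff_lt]; omega
  have h₂ : (n + d).descFactorial i ≠ 0 := by rw [Ne, Nat.descFactorial_eq_zero_iff_lt]; omega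
  simp [h₁, h₂]

open Nat in
theorem rectConvWeight_mul_rectNormalizer {n d i k : ℕ} (hi : i ≤ k) (hk : k ≤ d) :
    ((d - i)! * (d - (k - i))! / (d ! * (d - k)!) : ℝ) *
        ((n + d - i)! * (n + d - (k - i))! / ((n + d)! * (n + d - k)!)) *
      (rectNormalizer n d i * rectNormalizer n d (k - i)) = rectNormalizer n d k := by
  have h₁ := factorial_ratio_mul_pochEval (D := d) hi hk
  have h₂ := factorial_ratio_mul_pochEval (D := n + d) hi (by omega : k ≤ n + d)
  simp only [rectNormalizer, neg_natCast_sub_natCast]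
  linear_combination
    ((n + d - i)! * (n + d - (k - i))! / ((n + d)! * (n + d - k)!) : ℝ) *
      pochEval (-((n + d : ℕ) : ℝ)) i * pochEval (-((n + d : ℕ) : ℝ)) (k - i) * h₁ +
    pochEval (-(d : ℝ)) k * h₂

noncomputable def rectCumulantSeries (n d : ℕ) (a : ℕ → ℝ) : ℝ⟦X⟧ :=
  PowerSeries.mk fun i => if i ≤ d then (if i = 0 then 1 else a i) / rectNormalizer n d i else 0

theorem constantCoeff_rectCumulantSeries (n d : ℕ) (a : ℕ → ℝ) :
    constantCoeff (rectCumulantSeries n d a) = 1 := by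
  simp [rectCumulantSeries, ← coeff_zero_eq_constantCoeff_apply, rectNormalizer_zero]

theorem rectCumulant_eq_coeff_flog_expand (n d : ℕ) (a : ℕ → ℝ) (ℓ : ℕ) :
    rectCumulant n d a ℓ =
      ℓ * coeff (2 * ℓ) (flog (expand 2 two_ne_zero (rectCumulantSeries n d a))) := by
  rw [rectCumulant]
  congr 3
  ext j
  rw [coeff_mk, coeff_expand, rectCumulantSeries, coeff_mk, rectNormalizer]
  by_cases hj : j = 0
  · simp [hj, pochEval]
  · rw [if_neg hj]
    split_ifs <;> first | rfl | omega

theorem rectConvCoeff_zero (n d : ℕ) (a b : ℕ → ℝ) : rectConvCoeff n d a b 0 = 1 := by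
  simp [rectConvCoeff, div_self, Nat.factorial_ne_zero]

theorem coeff_rectCumulantSeries_rectConvCoeff {n d k : ℕ} (a b : ℕ → ℝ) (hk : k ≤ d) :
    coeff k (rectCumulantSeries n d (rectConvCoeff n d a b)) =
      coeff k (rectCumulantSeries n d a * rectCumulantSeries n d b) := by
  have hc : (if k = 0 then 1 else rectConvCoeff n d a b k) = rectConvCoeff n d a b k := by
    split_ifs with h
    · rw [h, rectConvCoeff_zero]
    · rfl
  rw [coeff_mul, Nat.sum_antidiagonal_eq_sum_range_succ
    (fun i j => coeff i (rectCumulantSeries n d a) * coeff j (rectCumulantSeries n d b)),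
    rectCumulantSeries, coeff_mk, if_pos hk, hc, rectConvCoeff, sum_div]
  refine sum_congr rfl fun i hi => ?_
  have hik : i ≤ k := Nat.lt_succ_iff.mp (mem_range.mp hi)
  simp only [rectCumulantSeries, coeff_mk, if_pos (hik.trans hk), if_pos ((k.sub_le i).trans hk)]
  rw [← rectConvWeight_mul_rectNormalizer hik hk]
  have := rectNormalizer_ne_zero n (hik.trans hk)
  have := rectNormalizer_ne_zero n ((k.sub_le i).trans hk)
  field_simp

theorem X_pow_dvd_rectCumulantSeries_rectConvCoeff_sub (n d : ℕ) (a b : ℕ → ℝ) :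
    X ^ (d + 1) ∣
      rectCumulantSeries n d (rectConvCoeff n d a b) -
        rectCumulantSeries n d a * rectCumulantSeries n d b :=
  X_pow_dvd_iff.mpr fun _ hk => by
    rw [map_sub, coeff_rectCumulantSeries_rectConvCoeff a b (by omega), sub_self]

theorem rectangular_cumulants_linearize_general (n d : ℕ) (a b : ℕ → ℝ) :
    ∀ ℓ : ℕ, 1 ≤ ℓ → ℓ ≤ d →
      rectCumulant n d (rectConvCoeff n d a b) ℓ =
        rectCumulant n d a ℓ + rectCumulant n d b ℓ := by
  intro ℓ _ hℓ
  set E := expand (R := ℝ) 2 two_ne_zero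
  have hdvd : X ^ (2 * ℓ + 1) ∣ E (rectCumulantSeries n d (rectConvCoeff n d a b)) -
      E (rectCumulantSeries n d a) * E (rectCumulantSeries n d b) := by
    refine (pow_dvd_pow X (by omega : 2 * ℓ + 1 ≤ 2 * (d + 1))).trans ?_
    rw [← map_mul, ← map_sub, pow_mul, ← expand_X 2 two_ne_zero, ← map_pow]
    exact map_dvd E (X_pow_dvd_rectCumulantSeries_rectConvCoeff_sub n d a b)
  simp only [rectCumulant_eq_coeff_flog_expand]
  rw [coeff_flog_eq_of_X_pow_dvd_sub hdvd, flog_mul (by simp [E, constantCoeff_rectCumulantSeries])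
    (by simp [E, constantCoeff_rectCumulantSeries]), map_add, mul_add]

/-- Theorem 4.7: the `(n,d)`-rectangular cumulants linearize the `(n,d)`-rectangular
convolution:  `K^{n,d}_{2ℓ}[p ⊞^n_d r] = K^{n,d}_{2ℓ}[p] + K^{n,d}_{2ℓ}[r]`, `ℓ = 1,…,d`. -/
theorem rectangular_cumulants_linearize (n d : ℕ) (hd : 1 ≤ d) (a b : ℕ → ℝ) :
    ∀ ℓ : ℕ, 1 ≤ ℓ → ℓ ≤ d →
      rectCumulant n d (rectConvCoeff n d a b) ℓ =
        rectCumulant n d a ℓ + rectCumulant n d b ℓ :=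
  rectangular_cumulants_linearize_general n d a b
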